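/- For any probability density ϕ ∈ C_c(ℝ²) with ϕ ≥ 0, coupling constant Λ_ε = 2π/log(ε⁻¹) + 2πλ/(log ε⁻¹)², and ϕ_ε(x) = ε⁻²ϕ(ε⁻¹x), for all small ε the quantity a_ε(T) = sup_{y∈ℝ²} ∫₀ᵀ Λ_ε² E_{εy}[ϕ_ε(W_t)] dt (where W is planar Brownian motion with heat kernel P_t(x) = (2πt)⁻¹ e^{-|x|²/(2t)}) satisfies a_ε(T) ≤ C(‖ϕ‖_∞) Λ_ε² (1 + log⁺(ε⁻²T)). -/

import Mathlib

open MeasureTheory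

/-- Planar heat kernel `P_t(x) = (2πt)⁻¹ e^{-|x|²/(2t)}` on `ℝ²`. -/
noncomputable def heatK (t : ℝ) (x : ℝ × ℝ) : ℝ :=
  (2 * Real.pi * t)⁻¹ * Real.exp (-(x.1 ^ 2 + x.2 ^ 2) / (2 * t))

lemma heatK_nonneg {t : ℝ} (ht : 0 < t) (x : ℝ × ℝ) : 0 ≤ heatK t x := by
  unfold heatK
  positivity

lemma heatK_le {t : ℝ} (ht : 0 < t) (x : ℝ × ℝ) : heatK t x ≤ (2 * Real.pi * t)⁻¹ := by
  unfold heatK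
  have h1 : Real.exp (-(x.1 ^ 2 + x.2 ^ 2) / (2 * t)) ≤ 1 := by
    rw [Real.exp_le_one_iff]
    apply div_nonpos_of_nonpos_of_nonneg
    · nlinarith [sq_nonneg x.1, sq_nonneg x.2]
    · positivity
  calc (2 * Real.pi * t)⁻¹ * Real.exp (-(x.1 ^ 2 + x.2 ^ 2) / (2 * t))
      ≤ (2 * Real.pi * t)⁻¹ * 1 := by
        apply mul_le_mul_of_nonneg_left h1 (by positivity)
    _ = (2 * Real.pi * t)⁻¹ := mul_one _

lemma heatK_eq (t : ℝ) (x : ℝ × ℝ) :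
    heatK t x = (2 * Real.pi * t)⁻¹ *
      (Real.exp (-(2 * t)⁻¹ * x.1 ^ 2) * Real.exp (-(2 * t)⁻¹ * x.2 ^ 2)) := by
  unfold heatK
  have h : -(x.1 ^ 2 + x.2 ^ 2) / (2 * t) = -(2 * t)⁻¹ * x.1 ^ 2 + -(2 * t)⁻¹ * x.2 ^ 2 := by
    rw [div_eq_mul_inv]; ring
  rw [h, Real.exp_add]

lemma integrable_heatK {t : ℝ} (ht : 0 < t) : Integrable (heatK t) := by
  have hb : (0 : ℝ) < (2 * t)⁻¹ := by positivity
  have hfun : heatK t = fun x : ℝ × ℝ => (2 * Real.pi * t)⁻¹ *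
      (Real.exp (-(2 * t)⁻¹ * x.1 ^ 2) * Real.exp (-(2 * t)⁻¹ * x.2 ^ 2)) :=
    funext (heatK_eq t)
  rw [hfun]
  exact ((integrable_exp_neg_mul_sq hb).mul_prod (integrable_exp_neg_mul_sq hb)).const_mul _

lemma integral_heatK {t : ℝ} (ht : 0 < t) : ∫ x : ℝ × ℝ, heatK t x = 1 := by
  have hb : (0 : ℝ) < (2 * t)⁻¹ := by positivity
  simp only [heatK_eq]
  rw [MeasureTheory.integral_const_mul]
  have hsplit : ∫ a : ℝ × ℝ, Real.exp (-(2 * t)⁻¹ * a.1 ^ 2) * Real.exp (-(2 * t)⁻¹ * a.2 ^ 2)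
      = (∫ x : ℝ, Real.exp (-(2 * t)⁻¹ * x ^ 2)) * ∫ x : ℝ, Real.exp (-(2 * t)⁻¹ * x ^ 2) :=
    integral_prod_mul (μ := (volume : Measure ℝ)) (ν := (volume : Measure ℝ))
      (fun x : ℝ => Real.exp (-(2 * t)⁻¹ * x ^ 2)) (fun x : ℝ => Real.exp (-(2 * t)⁻¹ * x ^ 2))
  rw [hsplit, integral_gaussian, Real.mul_self_sqrt (by positivity)]
  have hπ : Real.pi ≠ 0 := Real.pi_ne_zero
  field_simp

set_option maxHeartbeats 1000000 in
/-- For a continuous compactly supported probability density `ϕ` on `ℝ²`, with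
`Λ_ε = 2π/log ε⁻¹ + 2πλ/(log ε⁻¹)²` and `ϕ_ε(x) = ε⁻² ϕ(ε⁻¹ x)`, there is a constant
`C > 0` (depending only on `ϕ`) so that for all small `ε`,
`sup_y ∫₀ᵀ Λ_ε² E_{εy}[ϕ_ε(W_t)] dt ≤ C Λ_ε² (1 + log⁺(ε⁻² T))`, where
`E_{εy}[ϕ_ε(W_t)] = ∫ P_t(εy - z) ϕ_ε(z) dz`. -/
theorem a_eps_bound (ϕ : ℝ × ℝ → ℝ) (hcont : Continuous ϕ) (hsupp : HasCompactSupport ϕ)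
    (hnn : ∀ x, 0 ≤ ϕ x) (hprob : ∫ x, ϕ x = 1) :
    ∃ C > (0:ℝ), ∀ lam : ℝ, ∃ ε₀ > (0:ℝ), ∀ ε : ℝ, 0 < ε → ε < ε₀ →
      ∀ T > (0:ℝ), ∀ y : ℝ × ℝ,
        (∫ t in (0:ℝ)..T,
            (2 * Real.pi / Real.log ε⁻¹ + 2 * Real.pi * lam / (Real.log ε⁻¹) ^ 2) ^ 2
              * ∫ z : ℝ × ℝ, heatK t (ε • y - z) * ((ε⁻¹) ^ 2 * ϕ (ε⁻¹ • z)))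
          ≤ C * (2 * Real.pi / Real.log ε⁻¹ + 2 * Real.pi * lam / (Real.log ε⁻¹) ^ 2) ^ 2
              * (1 + max (Real.log (ε⁻¹ ^ 2 * T)) 0) := by
  obtain ⟨M, hM⟩ := hsupp.exists_bound_of_continuous hcont
  have hM0 : (0 : ℝ) ≤ M := le_trans (norm_nonneg _) (hM 0)
  refine ⟨M + 1, by linarith, fun lam => ⟨1, one_pos, fun ε hε hε1 T hT y => ?_⟩⟩
  have hεne : ε ≠ 0 := ne_of_gt hε
  set Λ : ℝ := 2 * Real.pi / Real.log ε⁻¹ + 2 * Real.pi * lam / (Real.log ε⁻¹) ^ 2 with hΛ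
  set g : ℝ → ℝ := fun t => ∫ z : ℝ × ℝ, heatK t (ε • y - z) * ((ε⁻¹) ^ 2 * ϕ (ε⁻¹ • z))
    with hg
  set L : ℝ := max (Real.log (ε⁻¹ ^ 2 * T)) 0 with hLdef
  have hL0 : 0 ≤ L := le_max_right _ _
  -- the mollified density
  have hϕεcont : Continuous (fun z : ℝ × ℝ => (ε⁻¹) ^ 2 * ϕ (ε⁻¹ • z)) :=
    continuous_const.mul (hcont.comp (continuous_const_smul _))
  have hϕεsupp : HasCompactSupport (fun z : ℝ × ℝ => (ε⁻¹) ^ 2 * ϕ (ε⁻¹ • z)) := by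
    apply HasCompactSupport.mul_left
    exact hsupp.comp_smul (inv_ne_zero hεne)
  have hϕεint : Integrable (fun z : ℝ × ℝ => (ε⁻¹) ^ 2 * ϕ (ε⁻¹ • z)) :=
    hϕεcont.integrable_of_hasCompactSupport hϕεsupp
  have hfinrank : Module.finrank ℝ (ℝ × ℝ) = 2 := by
    simp [Module.finrank_prod]
  have hϕεtotal : ∫ z : ℝ × ℝ, (ε⁻¹) ^ 2 * ϕ (ε⁻¹ • z) = 1 := by
    rw [MeasureTheory.integral_const_mul, MeasureTheory.Measure.integral_comp_smul volume ϕ ε⁻¹, hfinrank,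
      hprob]
    rw [abs_of_nonneg (by positivity : (0:ℝ) ≤ ((ε⁻¹ ^ 2)⁻¹ : ℝ))]
    simp only [smul_eq_mul, mul_one]
    field_simp
  have hϕεbd : ∀ z : ℝ × ℝ, (ε⁻¹) ^ 2 * ϕ (ε⁻¹ • z) ≤ (ε⁻¹) ^ 2 * M := fun z =>
    mul_le_mul_of_nonneg_left (le_trans (le_abs_self _) (hM _)) (by positivity)
  have hϕεnn : ∀ z : ℝ × ℝ, 0 ≤ (ε⁻¹) ^ 2 * ϕ (ε⁻¹ • z) := fun z => by
    have := hnn (ε⁻¹ • z); positivity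
  -- integrability of the inner integrand for t > 0
  have hInt1 : ∀ t : ℝ, 0 < t →
      Integrable (fun z : ℝ × ℝ => heatK t (ε • y - z) * ((ε⁻¹) ^ 2 * ϕ (ε⁻¹ • z))) := by
    intro t ht
    apply hϕεint.bdd_mul (c := (2 * Real.pi * t)⁻¹)
    · apply Continuous.aestronglyMeasurable
      unfold heatK
      exact continuous_const.mul (Real.continuous_exp.comp (by continuity))
    · refine Filter.Eventually.of_forall fun z => ?_
      rw [Real.norm_eq_abs, abs_of_nonneg (heatK_nonneg ht _)]
      exact heatK_le ht _
  -- translation invariance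
  have hKshift : ∀ t : ℝ, 0 < t → ∫ z : ℝ × ℝ, heatK t (ε • y - z) = 1 := by
    intro t ht
    rw [integral_sub_left_eq_self (heatK t) volume (ε • y)]
    exact integral_heatK ht
  have hKshiftInt : ∀ t : ℝ, 0 < t → Integrable (fun z : ℝ × ℝ => heatK t (ε • y - z)) := by
    intro t ht
    have := (integrable_heatK ht).comp_sub_left (ε • y)
    exact this
  -- pointwise bounds on g
  have hgnn : ∀ t : ℝ, 0 < t → 0 ≤ g t := by
    intro t ht
    apply integral_nonneg
    intro z
    exact mul_nonneg (heatK_nonneg ht _) (hϕεnn z)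
  have hgle1 : ∀ t : ℝ, 0 < t → g t ≤ (ε⁻¹) ^ 2 * M := by
    intro t ht
    have step : g t ≤ ∫ z : ℝ × ℝ, heatK t (ε • y - z) * ((ε⁻¹) ^ 2 * M) := by
      apply integral_mono (hInt1 t ht) ((hKshiftInt t ht).mul_const _)
      intro z
      exact mul_le_mul_of_nonneg_left (hϕεbd z) (heatK_nonneg ht _)
    calc g t ≤ ∫ z : ℝ × ℝ, heatK t (ε • y - z) * ((ε⁻¹) ^ 2 * M) := step
      _ = (∫ z : ℝ × ℝ, heatK t (ε • y - z)) * ((ε⁻¹) ^ 2 * M) := MeasureTheory.integral_mul_const _ _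
      _ = (ε⁻¹) ^ 2 * M := by rw [hKshift t ht, one_mul]
  have hgle2 : ∀ t : ℝ, 0 < t → g t ≤ (2 * Real.pi)⁻¹ * t⁻¹ := by
    intro t ht
    have step : g t ≤ ∫ z : ℝ × ℝ, (2 * Real.pi * t)⁻¹ * ((ε⁻¹) ^ 2 * ϕ (ε⁻¹ • z)) := by
      apply integral_mono (hInt1 t ht) (hϕεint.const_mul _)
      intro z
      exact mul_le_mul_of_nonneg_right (heatK_le ht _) (hϕεnn z)
    calc g t ≤ ∫ z : ℝ × ℝ, (2 * Real.pi * t)⁻¹ * ((ε⁻¹) ^ 2 * ϕ (ε⁻¹ • z)) := step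
      _ = (2 * Real.pi * t)⁻¹ * ∫ z : ℝ × ℝ, (ε⁻¹) ^ 2 * ϕ (ε⁻¹ • z) :=
          MeasureTheory.integral_const_mul _ _
      _ = (2 * Real.pi * t)⁻¹ := by rw [hϕεtotal, mul_one]
      _ = (2 * Real.pi)⁻¹ * t⁻¹ := by rw [mul_inv]
  have hg0 : g 0 = 0 := by
    simp [hg, heatK]
  -- measurability of g
  have hgmeas : StronglyMeasurable g := by
    have hcontsub : Continuous fun p : ℝ × (ℝ × ℝ) => ε • y - p.2 := continuous_const.sub continuous_snd
    have m2 : Measurable fun p : ℝ × (ℝ × ℝ) =>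
        ((ε • y - p.2).1 ^ 2 + (ε • y - p.2).2 ^ 2) :=
      (((continuous_fst.comp hcontsub).pow 2).add
        ((continuous_snd.comp hcontsub).pow 2)).measurable
    have m3 : Measurable fun p : ℝ × (ℝ × ℝ) =>
        -((ε • y - p.2).1 ^ 2 + (ε • y - p.2).2 ^ 2) / (2 * p.1) :=
      m2.neg.div (measurable_const.mul measurable_fst)
    have hF : Measurable (fun p : ℝ × (ℝ × ℝ) =>
        heatK p.1 (ε • y - p.2) * ((ε⁻¹) ^ 2 * ϕ (ε⁻¹ • p.2))) := by
      unfold heatK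
      exact ((measurable_const.mul measurable_fst).inv.mul
        (Real.measurable_exp.comp m3)).mul
        (measurable_const.mul (hcont.measurable.comp
          ((continuous_const_smul (ε⁻¹ : ℝ)).comp continuous_snd).measurable))
    exact hF.stronglyMeasurable.integral_prod_right'
  have hgII : ∀ a b : ℝ, 0 ≤ a → a ≤ b → IntervalIntegrable g volume a b := by
    intro a b ha hab
    rw [intervalIntegrable_iff_integrableOn_Ioc_of_le hab]
    apply Integrable.mono' (integrable_const ((ε⁻¹) ^ 2 * M))
      (hgmeas.aestronglyMeasurable.restrict)
    rw [ae_restrict_iff' measurableSet_Ioc]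
    filter_upwards with t ht
    have htpos : 0 < t := lt_of_le_of_lt ha ht.1
    rw [Real.norm_eq_abs, abs_of_nonneg (hgnn t htpos)]
    exact hgle1 t htpos
  -- the key estimate on ∫ g
  have key : ∫ t in (0:ℝ)..T, g t ≤ (M + 1) * (1 + L) := by
    rcases le_or_gt T (ε ^ 2) with hTe | hTe
    · have h1 : ∫ t in (0:ℝ)..T, g t ≤ ∫ t in (0:ℝ)..T, (ε⁻¹) ^ 2 * M := by
        apply intervalIntegral.integral_mono_on hT.le (hgII 0 T le_rfl hT.le)
          intervalIntegrable_const
        intro t ht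
        rcases eq_or_lt_of_le ht.1 with h | h
        · rw [← h, hg0]; positivity
        · exact hgle1 t h
      have h2 : ∫ t in (0:ℝ)..T, (ε⁻¹) ^ 2 * M = T * ((ε⁻¹) ^ 2 * M) := by
        rw [intervalIntegral.integral_const]
        simp [smul_eq_mul]
      have h3 : T * ((ε⁻¹) ^ 2 * M) ≤ M := by
        have hε2 : (0:ℝ) < ε ^ 2 := by positivity
        have : T * (ε⁻¹) ^ 2 ≤ 1 := by
          rw [inv_pow]
          rw [mul_inv_le_iff₀ hε2, one_mul]
          exact hTe
        nlinarith
      nlinarith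
    · have hε2 : (0:ℝ) < ε ^ 2 := by positivity
      have hsplit : ∫ t in (0:ℝ)..T, g t =
          (∫ t in (0:ℝ)..(ε ^ 2), g t) + ∫ t in (ε ^ 2)..T, g t :=
        (intervalIntegral.integral_add_adjacent_intervals (hgII 0 (ε ^ 2) le_rfl hε2.le)
          (hgII (ε ^ 2) T hε2.le hTe.le)).symm
      have hpiece1 : ∫ t in (0:ℝ)..(ε ^ 2), g t ≤ M := by
        have h1 : ∫ t in (0:ℝ)..(ε ^ 2), g t ≤ ∫ t in (0:ℝ)..(ε ^ 2), (ε⁻¹) ^ 2 * M := by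
          apply intervalIntegral.integral_mono_on hε2.le (hgII 0 (ε ^ 2) le_rfl hε2.le)
            intervalIntegrable_const
          intro t ht
          rcases eq_or_lt_of_le ht.1 with h | h
          · rw [← h, hg0]; positivity
          · exact hgle1 t h
        have h2 : ∫ t in (0:ℝ)..(ε ^ 2), (ε⁻¹) ^ 2 * M = M := by
          rw [intervalIntegral.integral_const]
          simp only [smul_eq_mul, sub_zero]
          field_simp
        linarith
      have hinvII : IntervalIntegrable (fun t : ℝ => (2 * Real.pi)⁻¹ * t⁻¹) volume (ε ^ 2) T := by
        apply ContinuousOn.intervalIntegrable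
        apply ContinuousOn.mul continuousOn_const
        apply ContinuousOn.inv₀ continuousOn_id
        intro x hx
        have hxpos : (0:ℝ) < x := by
          rcases Set.mem_uIcc.mp hx with h | h
          · exact lt_of_lt_of_le hε2 h.1
          · linarith [h.1, h.2]
        exact ne_of_gt hxpos
      have hpiece2 : ∫ t in (ε ^ 2)..T, g t ≤ (2 * Real.pi)⁻¹ * Real.log (ε⁻¹ ^ 2 * T) := by
        have h1 : ∫ t in (ε ^ 2)..T, g t ≤ ∫ t in (ε ^ 2)..T, (2 * Real.pi)⁻¹ * t⁻¹ := by
          apply intervalIntegral.integral_mono_on hTe.le (hgII (ε ^ 2) T hε2.le hTe.le) hinvII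
          intro t ht
          exact hgle2 t (lt_of_lt_of_le hε2 ht.1)
        have h2 : ∫ t in (ε ^ 2)..T, (2 * Real.pi)⁻¹ * t⁻¹
            = (2 * Real.pi)⁻¹ * Real.log (T / ε ^ 2) := by
          rw [intervalIntegral.integral_const_mul, integral_inv_of_pos hε2 hT]
        have h3 : T / ε ^ 2 = ε⁻¹ ^ 2 * T := by
          rw [inv_pow, div_eq_inv_mul]
        rw [h2, h3] at h1
        exact h1
      have hlogpos : 0 ≤ Real.log (ε⁻¹ ^ 2 * T) := by
        apply Real.log_nonneg
        rw [inv_pow, ← div_eq_inv_mul]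
        exact (one_le_div hε2).mpr hTe.le
      have hLeq : L = Real.log (ε⁻¹ ^ 2 * T) := max_eq_left hlogpos
      have hπinv : (2 * Real.pi)⁻¹ ≤ 1 := by
        rw [inv_le_one_iff₀]
        right
        nlinarith [Real.pi_gt_three]
      have hπinv0 : (0:ℝ) ≤ (2 * Real.pi)⁻¹ := by positivity
      rw [hsplit, hLeq]
      nlinarith [hlogpos]
  -- conclude
  have hΛ2 : (0:ℝ) ≤ Λ ^ 2 := sq_nonneg _
  calc (∫ t in (0:ℝ)..T, Λ ^ 2 * g t) = Λ ^ 2 * ∫ t in (0:ℝ)..T, g t := by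
        rw [intervalIntegral.integral_const_mul]
    _ ≤ Λ ^ 2 * ((M + 1) * (1 + L)) := mul_le_mul_of_nonneg_left key hΛ2
    _ = (M + 1) * Λ ^ 2 * (1 + L) := by ring
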